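/- Split conformal coverage: let (X_1,Y_1),...,(X_{n+1},Y_{n+1}) be i.i.d., let Ŝ be a fixed (pre-trained) score function independent of these data, set S_i = Ŝ(X_i,Y_i), and let q̂ be the ⌈(1−α)(n+1)⌉-th smallest value among S_1,...,S_n (with q̂ = ∞ if ⌈(1−α)(n+1)⌉ > n). Then P(S_{n+1} ≤ q̂) ≥ 1 − α. -/

import Mathlib

/-!
The scores `S_1, …, S_{n+1}` are exchangeable, so the strict rank of `S_{n+1}` (the number of
scores strictly below it) is as likely to be `< k` as that of any other `S_j`. Among any `n + 1`
values at least `k` have strict rank `< k`, hence `(n + 1) P(rank of S_{n+1} < k) ≥ k`. Finally,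
if fewer than `k` of the scores lie strictly below `S_{n+1}`, then `S_{n+1}` is at most the
`k`-th smallest of `S_1, …, S_n`; take `k = ⌈(1 − α)(n + 1)⌉`.
-/

open MeasureTheory ProbabilityTheory Finset
open scoped ENNReal

section Order

variable {ι α : Type*} [Fintype ι]

def strictRank [LinearOrder α] (v : ι → α) (j : ι) : ℕ :=
  #{i | v i < v j}

/-- `⊤` when `k` exceeds the number of values. -/
noncomputable def orderStatistic [CompleteLinearOrder α] (v : ι → α) (k : ℕ) : α :=
  sInf {t | k ≤ #{i | v i ≤ t}}

lemma strictRank_comp_perm [LinearOrder α] (v : ι → α) (σ : Equiv.Perm ι) (j : ι) :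
    strictRank (v ∘ σ) j = strictRank v (σ j) := by
  simp only [strictRank, card_filter, Function.comp_apply]
  exact Equiv.sum_comp σ fun i => if v i < v (σ j) then 1 else 0

lemma strictRank_last [LinearOrder α] {n : ℕ} (v : Fin (n + 1) → α) :
    strictRank v (Fin.last n) = #{i : Fin n | v i.castSucc < v (Fin.last n)} := by
  simp only [strictRank, card_filter, Fin.sum_univ_castSucc, lt_irrefl, if_false, add_zero]

/-- A minimum of `v` outside `{j | strictRank v j < k}` would have all strictly smaller values
inside that set, and hence would belong to it. -/
lemma le_card_filter_strictRank_lt [LinearOrder α] (v : ι → α) {k : ℕ}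
    (hk : k ≤ Fintype.card ι) : k ≤ #{j | strictRank v j < k} := by
  classical
  by_contra! hlt
  set good : Finset ι := {j | strictRank v j < k}
  have hne : (univ \ good).Nonempty := by
    rw [sdiff_nonempty]
    intro hsub
    have := card_le_card hsub
    rw [card_univ] at this
    omega
  obtain ⟨j₀, hj₀, hmin⟩ := (univ \ good).exists_min_image v hne
  have hbelow : ({i | v i < v j₀} : Finset ι) ⊆ good := by
    intro i hi
    rw [mem_filter] at hi
    by_contra hig
    exact (hmin i (mem_sdiff.mpr ⟨mem_univ i, hig⟩)).not_gt hi.2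
  exact (mem_sdiff.mp hj₀).2 (mem_filter.mpr ⟨mem_univ _, (card_le_card hbelow).trans_lt hlt⟩)

lemma le_orderStatistic_of_card_lt [CompleteLinearOrder α] {v : ι → α} {x : α} {k : ℕ}
    (h : #{i | v i < x} < k) : x ≤ orderStatistic v k := by
  refine le_sInf fun t ht => ?_
  by_contra! htx
  have hsub : univ.filter (fun i => v i ≤ t) ⊆ univ.filter (fun i => v i < x) := by
    intro i hi
    simp only [mem_filter, mem_univ, true_and] at hi ⊢
    exact hi.trans_lt htx
  exact (lt_irrefl k) ((show k ≤ _ from ht).trans (card_le_card hsub) |>.trans_lt h)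

lemma measurable_strictRank [LinearOrder α] [TopologicalSpace α] [OrderClosedTopology α]
    [SecondCountableTopology α] [MeasurableSpace α] [OpensMeasurableSpace α] (j : ι) :
    Measurable fun v : ι → α => strictRank v j := by
  simp only [strictRank, card_filter]
  exact Finset.measurable_sum _ fun i _ =>
    Measurable.ite (measurableSet_lt (measurable_pi_apply i) (measurable_pi_apply j))
      measurable_const measurable_const

end Order

section Measure

variable {Ω ι : Type*} [MeasurableSpace Ω] [Fintype ι] {μ : Measure Ω}

open scoped Classical in
lemma natCast_mul_measure_univ_le_sum_measure {A : ι → Set Ω}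
    (hA : ∀ j, NullMeasurableSet (A j) μ) {k : ℕ} (h : ∀ ω, k ≤ #{j | ω ∈ A j}) :
    k * μ Set.univ ≤ ∑ j, μ (A j) := by
  have hcount : ∀ ω, ∑ j, (A j).indicator 1 ω = (#{j | ω ∈ A j} : ℝ≥0∞) := by
    intro ω
    simp only [Set.indicator_apply, Pi.one_apply, sum_boole]
  calc (k : ℝ≥0∞) * μ Set.univ = ∫⁻ _, (k : ℝ≥0∞) ∂μ := (lintegral_const _).symm
    _ ≤ ∫⁻ ω, ∑ j, (A j).indicator 1 ω ∂μ :=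
        lintegral_mono fun ω => hcount ω ▸ Nat.cast_le.mpr (h ω)
    _ = ∑ j, ∫⁻ ω, (A j).indicator 1 ω ∂μ :=
        lintegral_finsetSum' _ fun j _ => aemeasurable_const.indicator₀ (hA j)
    _ = ∑ j, μ (A j) := sum_congr rfl fun j _ => lintegral_indicator_one₀ (hA j)

lemma natCast_mul_measure_univ_le_card_mul_measure_strictRank_lt {α : Type*} [LinearOrder α]
    [TopologicalSpace α] [OrderClosedTopology α] [SecondCountableTopology α] [MeasurableSpace α]
    [OpensMeasurableSpace α] {V : Ω → ι → α}
    (hV : ∀ σ : Equiv.Perm ι, IdentDistrib (fun ω => V ω ∘ σ) V μ μ) {k : ℕ}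
    (hk : k ≤ Fintype.card ι) (j : ι) :
    k * μ Set.univ ≤ Fintype.card ι * μ {ω | strictRank (V ω) j < k} := by
  classical
  have hE : ∀ j', MeasurableSet {v : ι → α | strictRank v j' < k} := fun j' =>
    measurableSet_lt (measurable_strictRank j') measurable_const
  have hsame : ∀ j', μ {ω | strictRank (V ω) j' < k} = μ {ω | strictRank (V ω) j < k} := by
    intro j'
    have hpre : {ω | strictRank (V ω) j' < k} =
        (fun ω => V ω ∘ Equiv.swap j j') ⁻¹' {v | strictRank v j < k} := by
      ext ω
      simp [strictRank_comp_perm]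
    rw [hpre, (hV _).measure_mem_eq (hE j)]
    rfl
  calc (k : ℝ≥0∞) * μ Set.univ ≤ ∑ j', μ {ω | strictRank (V ω) j' < k} :=
        natCast_mul_measure_univ_le_sum_measure (A := fun j' => {ω | strictRank (V ω) j' < k})
          (fun j' => (hV 1).aemeasurable_snd.nullMeasurableSet_preimage (hE j'))
          fun ω => by convert le_card_filter_strictRank_lt (V ω) hk; exact Iff.rfl
    _ = Fintype.card ι * μ {ω | strictRank (V ω) j < k} := by
        simp only [hsame, sum_const, card_univ, nsmul_eq_mul]

end Measure

lemma ProbabilityTheory.iIndepFun.identDistrib_comp_perm {Ω ι γ : Type*} [MeasurableSpace Ω]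
    [Fintype ι] [MeasurableSpace γ] {μ : Measure Ω} {Z : ι → Ω → γ}
    (hZ : ∀ i, AEMeasurable (Z i) μ) (hindep : iIndepFun Z μ)
    (hident : ∀ i j, IdentDistrib (Z i) (Z j) μ μ) (σ : Equiv.Perm ι) :
    IdentDistrib (fun ω i => Z (σ i) ω) (fun ω i => Z i ω) μ μ where
  aemeasurable_fst := aemeasurable_pi_lambda _ fun i => hZ (σ i)
  aemeasurable_snd := aemeasurable_pi_lambda _ hZ
  map_eq := by
    rw [(hindep.precomp σ.injective).map_fun_eq_pi_map (fun i => hZ (σ i)),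
      hindep.map_fun_eq_pi_map hZ]
    congr 1
    funext i
    exact (hident (σ i) i).map_eq

/-- Split conformal coverage: for i.i.d. data `Z 1, ..., Z (n+1)` and a fixed
pre-trained score function `S`, letting `q̂` be the `⌈(1−α)(n+1)⌉`-th smallest of the
first `n` scores (interpreted as `+∞` in `EReal` when `⌈(1−α)(n+1)⌉ > n`), we have
`P(S (Z (n+1)) ≤ q̂) ≥ 1 − α`. -/
theorem split_conformal_coverage
    {Ω : Type*} [MeasureSpace Ω] [IsProbabilityMeasure (volume : Measure Ω)]
    {γ : Type*} [MeasurableSpace γ]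
    (n : ℕ) (α : ℝ) (hα : α ∈ Set.Ioo (0 : ℝ) 1)
    (Z : Fin (n + 1) → Ω → γ) (S : γ → ℝ)
    (hZmeas : ∀ i, Measurable (Z i)) (hSmeas : Measurable S)
    (hindep : iIndepFun Z volume)
    (hident : ∀ i j, IdentDistrib (Z i) (Z j)) :
    ENNReal.ofReal (1 - α) ≤
      volume {ω : Ω | (S (Z (Fin.last n) ω) : EReal) ≤
        sInf {t : EReal | ⌈(1 - α) * (n + 1)⌉₊ ≤
          (univ.filter fun i : Fin n =>
            (S (Z i.castSucc ω) : EReal) ≤ t).card}} := by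
  set k := ⌈(1 - α) * (n + 1)⌉₊
  have hk : k ≤ Fintype.card (Fin (n + 1)) := by
    rw [Fintype.card_fin, Nat.ceil_le]
    push_cast
    nlinarith [hα.1]
  set V : Ω → Fin (n + 1) → EReal := fun ω i => (S (Z i ω) : EReal)
  have hV : ∀ σ : Equiv.Perm (Fin (n + 1)), IdentDistrib (fun ω => V ω ∘ σ) V := fun σ =>
    (hindep.identDistrib_comp_perm (fun i => (hZmeas i).aemeasurable) hident σ).comp
      (measurable_pi_lambda _ fun i => measurable_coe_real_ereal.comp
        (hSmeas.comp (measurable_pi_apply i)))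
  have hrank := natCast_mul_measure_univ_le_card_mul_measure_strictRank_lt hV hk (Fin.last n)
  have hsub : {ω | strictRank (V ω) (Fin.last n) < k} ⊆ {ω | V ω (Fin.last n) ≤
      orderStatistic (fun i : Fin n => V ω i.castSucc) k} := fun ω hω =>
    le_orderStatistic_of_card_lt ((strictRank_last (V ω)).symm.trans_lt hω)
  rw [measure_univ, mul_one, Fintype.card_fin] at hrank
  calc ENNReal.ofReal (1 - α) ≤ ENNReal.ofReal (k / (n + 1 : ℕ)) := by
        gcongr
        rw [le_div_iff₀ (by positivity), Nat.cast_succ]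
        exact Nat.le_ceil _
    _ = k / (n + 1 : ℕ) := by
        rw [ENNReal.ofReal_div_of_pos (by positivity), ENNReal.ofReal_natCast,
          ENNReal.ofReal_natCast]
    _ ≤ volume {ω | strictRank (V ω) (Fin.last n) < k} := ENNReal.div_le_of_le_mul' hrank
    _ ≤ _ := measure_mono hsub
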